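/- For an ordered tree T on n vertices labeled via preorder in decreasing order, and for any two nonroot vertices u, v where the label of u is smaller than the label of v: the label of u precedes the label of v in the postorder reading π(T) if and only if v is a proper ancestor of u in T. -/

import Mathlib

/-- Ordered (plane) trees: a root with a list of subtrees. -/
inductive OTree : Type where
  | node : List OTree → OTree

namespace OTree

/-- Number of edges of an ordered tree. -/
def edges : OTree → ℕ
  | node [] => 0
  | node (t :: ts) => edges t + 1 + edges (node ts)

/-- Multiset of levels (distances from the root) of the nonroot vertices. -/
def levels : OTree → Multiset ℕ
  | node [] => 0
  | node (t :: ts) => ((1 : ℕ) ::ₘ (levels t).map (· + 1)) + levels (node ts)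

/-- Sum of the levels of all vertices (the root contributes 0). -/
def levelsSum (t : OTree) : ℕ := t.levels.sum

/-- The permutation word of a tree, entries shifted up by `k`: nonroot
vertices are labeled `k+n, …, k+1` in preorder and read in postorder. -/
def wordFrom : OTree → ℕ → List ℕ
  | node [], _ => []
  | node (t :: ts), k =>
      wordFrom t (k + edges (node ts)) ++
        (k + edges (node (t :: ts))) :: wordFrom (node ts) k

/-- The permutation `π(T)` of an ordered tree, as a word on `1, …, n`. -/
def word (t : OTree) : List ℕ := wordFrom t 0

/-- The lattice-path word of a tree via preorder traversal:
`true` = east step (down an edge), `false` = north step (up an edge). -/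
def pathWord : OTree → List Bool
  | node [] => []
  | node (t :: ts) => true :: (pathWord t ++ false :: pathWord (node ts))

/-- The subtree rooted at the vertex reached by the child-index path `p`. -/
def subtreeAt? : OTree → List ℕ → Option OTree
  | t, [] => some t
  | node [], _ :: _ => none
  | node (t :: _), 0 :: p => subtreeAt? t p
  | node (_ :: ts), (i + 1) :: p => subtreeAt? (node ts) (i :: p)

/-- The list of child-index paths to the nonroot vertices, in preorder. -/
def paths : OTree → List (List ℕ)
  | node [] => []
  | node (t :: ts) =>
      ([0] :: (paths t).map (0 :: ·)) ++
        (paths (node ts)).map (fun p => match p with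
          | i :: q => (i + 1) :: q
          | [] => [])

/-- The preorder label of the nonroot vertex at path `p` (labels `n, …, 1`). -/
def labelOf (t : OTree) (p : List ℕ) : ℕ := t.edges - t.paths.idxOf p

end OTree

/-- Area under a lattice path word (`true` = east, `false` = north):
the sum over east steps of the number of north steps preceding them. -/
def pathArea : List Bool → ℕ
  | [] => 0
  | true :: w => pathArea w
  | false :: w => pathArea w + w.count true

/-- A word avoids the pattern 132. -/
def Avoids132W (w : List ℕ) : Prop :=
  ¬ ∃ i j k : ℕ, i < j ∧ j < k ∧ k < w.length ∧
      w.getD i 0 < w.getD k 0 ∧ w.getD k 0 < w.getD j 0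

/-- Number of increasing patterns of length `k` in a word: index sets on
which the word is strictly increasing. -/
def incCountW (w : List ℕ) (k : ℕ) : ℕ :=
  ((Finset.univ : Finset (Finset (Fin w.length))).filter
    (fun S => S.card = k ∧ ∀ i ∈ S, ∀ j ∈ S, i < j → w.get i < w.get j)).card

/-- A permutation of `Fin n` avoids the pattern 132. -/
def Avoids132P {n : ℕ} (π : Equiv.Perm (Fin n)) : Prop :=
  ¬ ∃ i j k : Fin n, i < j ∧ j < k ∧ π i < π k ∧ π k < π j

/-- Number of increasing patterns of length `k` in a permutation of `Fin n`. -/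
def incCountP {n : ℕ} (π : Equiv.Perm (Fin n)) (k : ℕ) : ℕ :=
  ((Finset.univ : Finset (Finset (Fin n))).filter
    (fun S => S.card = k ∧ ∀ i ∈ S, ∀ j ∈ S, i < j → π i < π j)).card

/-- A subdiagonal lattice path from `(0,0)` to `(n,n)`, as a sequence of
`2n` steps (`true` = east, `false` = north) with `n` east steps such that
every prefix has at least as many east steps as north steps. -/
def IsSubdiagPath (n : ℕ) (f : Fin (2 * n) → Bool) : Prop :=
  (Finset.univ.filter fun i => f i = true).card = n ∧
    ∀ m : ℕ, (Finset.univ.filter fun i : Fin (2 * n) => i.1 < m ∧ f i = false).card ≤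
      (Finset.univ.filter fun i : Fin (2 * n) => i.1 < m ∧ f i = true).card

/-- Area under a subdiagonal lattice path given as a step sequence. -/
def pathAreaF {n : ℕ} (f : Fin (2 * n) → Bool) : ℕ :=
  ∑ i ∈ Finset.univ.filter (fun i => f i = true),
    (Finset.univ.filter fun j : Fin (2 * n) => j < i ∧ f j = false).card

namespace OTree


section IdxGen

variable {α : Type*} [BEq α] [LawfulBEq α]

lemma idxg_cons_self (a : α) (l : List α) : (a :: l).idxOf a = 0 := by
  simp [List.idxOf_cons]

lemma idxg_cons_ne {x a : α} (l : List α) (h : x ≠ a) :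
    (x :: l).idxOf a = l.idxOf a + 1 := by
  have hb : (x == a) = false := beq_eq_false_iff_ne.2 h
  simp [List.idxOf_cons, hb]

lemma idxg_append_of_mem {a : α} {l₁ : List α} (l₂ : List α) (h : a ∈ l₁) :
    (l₁ ++ l₂).idxOf a = l₁.idxOf a := by
  induction l₁ with
  | nil => simp at h
  | cons x xs ih =>
    by_cases hx : x = a
    · subst hx; simp [idxg_cons_self]
    · rcases List.mem_cons.1 h with h' | h'
      · exact absurd h'.symm hx
      · rw [List.cons_append, idxg_cons_ne _ hx, idxg_cons_ne _ hx, ih h']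

lemma idxg_append_of_not_mem {a : α} {l₁ : List α} (l₂ : List α) (h : a ∉ l₁) :
    (l₁ ++ l₂).idxOf a = l₁.length + l₂.idxOf a := by
  induction l₁ with
  | nil => simp
  | cons x xs ih =>
    have hx : x ≠ a := fun he => h (he ▸ List.mem_cons_self)
    rw [List.cons_append, idxg_cons_ne _ hx, ih (fun hm => h (List.mem_cons_of_mem _ hm)),
      List.length_cons]
    omega

lemma idxg_lt_length {a : α} {l : List α} (h : a ∈ l) : l.idxOf a < l.length := by
  induction l with
  | nil => simp at h
  | cons x xs ih =>
    by_cases hx : x = a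
    · subst hx; simp [idxg_cons_self]
    · rcases List.mem_cons.1 h with h' | h'
      · exact absurd h'.symm hx
      · rw [idxg_cons_ne _ hx, List.length_cons]
        exact Nat.succ_lt_succ (ih h')

end IdxGen

/-- Helper for the shift of child indices in `paths`. -/
def shiftHead : List ℕ → List ℕ
  | [] => []
  | i :: q => (i + 1) :: q

@[simp] lemma shiftHead_cons (i : ℕ) (q : List ℕ) : shiftHead (i :: q) = (i + 1) :: q := rfl

lemma edges_nil : edges (node []) = 0 := by simp [edges]

lemma edges_cons (t : OTree) (ts : List OTree) :
    edges (node (t :: ts)) = edges t + 1 + edges (node ts) := by simp [edges]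

lemma paths_nil : paths (node []) = [] := by simp [paths]

lemma paths_cons (t : OTree) (ts : List OTree) :
    paths (node (t :: ts)) =
      [0] :: ((paths t).map (0 :: ·) ++ (paths (node ts)).map shiftHead) := by
  have h : (fun p => match p with | i :: q => (i + 1) :: q | ([] : List ℕ) => ([] : List ℕ))
      = shiftHead := by
    funext p; cases p <;> rfl
  simp [paths, h]

lemma wordFrom_cons (t : OTree) (ts : List OTree) (k : ℕ) :
    wordFrom (node (t :: ts)) k =
      wordFrom t (k + edges (node ts)) ++
        (k + edges (node (t :: ts))) :: wordFrom (node ts) k := by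
  simp [wordFrom]

lemma subtreeAt_zero (t : OTree) (ts : List OTree) (p : List ℕ) :
    subtreeAt? (node (t :: ts)) (0 :: p) = subtreeAt? t p := by simp [subtreeAt?]

lemma subtreeAt_succ (t : OTree) (ts : List OTree) (i : ℕ) (p : List ℕ) :
    subtreeAt? (node (t :: ts)) ((i + 1) :: p) = subtreeAt? (node ts) (i :: p) := by
  simp [subtreeAt?]

/-- Shifted label: labels `k+n, …, k+1` in preorder. -/
def lab (t : OTree) (k : ℕ) (p : List ℕ) : ℕ := k + t.edges - t.paths.idxOf p

lemma length_wordFrom : ∀ (t : OTree) (k : ℕ), (wordFrom t k).length = t.edges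
  | node [], _ => by simp [wordFrom, edges_nil]
  | node (t :: ts), k => by
      rw [wordFrom_cons, edges_cons]
      simp [length_wordFrom t _, length_wordFrom (node ts) k]
      omega

lemma mem_wordFrom : ∀ (t : OTree) (k x : ℕ), x ∈ wordFrom t k ↔ k < x ∧ x ≤ k + t.edges
  | node [], k, x => by simp [wordFrom, edges_nil]
  | node (t :: ts), k, x => by
      rw [wordFrom_cons, edges_cons]
      simp [mem_wordFrom t _ x, mem_wordFrom (node ts) k x, edges_cons]
      omega

lemma length_paths : ∀ (t : OTree), t.paths.length = t.edges
  | node [] => by simp [paths_nil, edges_nil]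
  | node (t :: ts) => by
      rw [paths_cons, edges_cons]
      simp [length_paths t, length_paths (node ts)]
      omega

lemma paths_ne_nil : ∀ (t : OTree), ∀ p ∈ t.paths, p ≠ []
  | node [] => by simp [paths_nil]
  | node (t :: ts) => by
      intro p hp
      rw [paths_cons] at hp
      rcases List.mem_cons.1 hp with h | hp'
      · simp [h]
      · rcases List.mem_append.1 hp' with h | h
        · rcases List.mem_map.1 h with ⟨r, _, rfl⟩
          simp
        · rcases List.mem_map.1 h with ⟨r, hr, rfl⟩
          have := paths_ne_nil (node ts) r hr
          match r, this with
          | i :: q, _ => simp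

lemma mem_paths_of_valid : ∀ (t : OTree) (p : List ℕ),
    p ≠ [] → (t.subtreeAt? p).isSome → p ∈ t.paths
  | node [], [], h, _ => absurd rfl h
  | node [], i :: p, _, hv => by simp [subtreeAt?] at hv
  | node (t :: ts), [], h, _ => absurd rfl h
  | node (t :: ts), 0 :: p, _, hv => by
      rw [subtreeAt_zero] at hv
      rw [paths_cons]
      rcases p with _ | ⟨j, q⟩
      · exact List.mem_cons_self
      · exact List.mem_cons_of_mem _ (List.mem_append_left _
          (List.mem_map_of_mem (mem_paths_of_valid t (j :: q) (by simp) hv)))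
  | node (t :: ts), (i + 1) :: p, _, hv => by
      rw [subtreeAt_succ] at hv
      rw [paths_cons]
      have hm := mem_paths_of_valid (node ts) (i :: p) (by simp) hv
      exact List.mem_cons_of_mem _ (List.mem_append_right _
        (by simpa using List.mem_map_of_mem (f := shiftHead) hm))

lemma indexOf_map_of_inj {g : List ℕ → List ℕ} {l : List (List ℕ)} {a : List ℕ}
    (ha : a ∈ l) (hinj : ∀ b ∈ l, g b = g a → b = a) :
    (l.map g).idxOf (g a) = l.idxOf a := by
  induction l with
  | nil => rfl
  | cons x xs ih =>
    by_cases hx : x = a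
    · subst hx
      rw [List.map_cons, idxg_cons_self _ _, idxg_cons_self]
    · have hgx : g x ≠ g a := fun h => hx (hinj x (List.mem_cons_self) h)
      rw [List.map_cons, idxg_cons_ne _ hgx, idxg_cons_ne _ hx,
        ih (by rcases List.mem_cons.1 ha with h | h;
               · exact absurd h.symm hx
               · exact h)
          (fun b hb => hinj b (List.mem_cons_of_mem _ hb))]

lemma mem_paths_cases {t : OTree} {ts : List OTree} {p : List ℕ}
    (hp : p ∈ paths (node (t :: ts))) :
    p = [0] ∨ (∃ r ∈ paths t, p = 0 :: r) ∨
      (∃ i q, (i :: q) ∈ paths (node ts) ∧ p = (i + 1) :: q) := by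
  rw [paths_cons] at hp
  rcases List.mem_cons.1 hp with h | hp'
  · exact Or.inl h
  · rcases List.mem_append.1 hp' with h | h
    · rcases List.mem_map.1 h with ⟨r, hr, rfl⟩
      exact Or.inr (Or.inl ⟨r, hr, rfl⟩)
    · rcases List.mem_map.1 h with ⟨r, hr, rfl⟩
      have hne := paths_ne_nil (node ts) r hr
      match r, hne with
      | i :: q, _ => exact Or.inr (Or.inr ⟨i, q, hr, rfl⟩)

lemma idx_zero (t : OTree) (ts : List OTree) :
    (paths (node (t :: ts))).idxOf [0] = 0 := by
  rw [paths_cons, idxg_cons_self]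

lemma idx_left (t : OTree) (ts : List OTree) {r : List ℕ} (hr : r ∈ paths t) :
    (paths (node (t :: ts))).idxOf (0 :: r) = t.paths.idxOf r + 1 := by
  have hne : ([0] : List ℕ) ≠ 0 :: r := by
    intro h
    exact paths_ne_nil t r hr (by simpa using h.symm)
  rw [paths_cons, idxg_cons_ne _ hne,
    idxg_append_of_mem _ (List.mem_map_of_mem hr),
    show (0 :: r) = (fun x => 0 :: x) r from rfl,
    indexOf_map_of_inj hr (fun b _ h => by simpa using h)]

lemma idx_right (t : OTree) (ts : List OTree) {i : ℕ} {q : List ℕ}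
    (hr : (i :: q) ∈ paths (node ts)) :
    (paths (node (t :: ts))).idxOf ((i + 1) :: q) =
      t.edges + 1 + (paths (node ts)).idxOf (i :: q) := by
  have hne : ([0] : List ℕ) ≠ (i + 1) :: q := by simp
  have hnm : (i + 1) :: q ∉ (paths t).map (0 :: ·) := by
    simp
  rw [paths_cons, idxg_cons_ne _ hne, idxg_append_of_not_mem _ hnm,
    List.length_map, length_paths,
    show ((i + 1) :: q) = shiftHead (i :: q) from rfl,
    indexOf_map_of_inj hr (fun b hb h => by
      have hbne := paths_ne_nil (node ts) b hb
      match b, hbne with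
      | j :: q', _ =>
        simp at h
        simp [h.1, h.2])]
  omega

lemma idx_lt {t : OTree} {p : List ℕ} (hp : p ∈ t.paths) :
    t.paths.idxOf p < t.edges := by
  rw [← length_paths]; exact idxg_lt_length hp

lemma lab_bounds {t : OTree} {p : List ℕ} (hp : p ∈ t.paths) (k : ℕ) :
    k < lab t k p ∧ lab t k p ≤ k + t.edges := by
  have := idx_lt hp
  unfold lab
  omega

lemma lab_zero (t : OTree) (ts : List OTree) (k : ℕ) :
    lab (node (t :: ts)) k [0] = k + edges (node (t :: ts)) := by
  simp [lab, idx_zero]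

lemma lab_left (t : OTree) (ts : List OTree) (k : ℕ) {r : List ℕ} (hr : r ∈ paths t) :
    lab (node (t :: ts)) k (0 :: r) = lab t (k + edges (node ts)) r := by
  have h1 := idx_lt hr
  unfold lab
  rw [idx_left t ts hr, edges_cons]
  omega

lemma lab_right (t : OTree) (ts : List OTree) (k : ℕ) {i : ℕ} {q : List ℕ}
    (hr : (i :: q) ∈ paths (node ts)) :
    lab (node (t :: ts)) k ((i + 1) :: q) = lab (node ts) k (i :: q) := by
  have h1 := idx_lt hr
  unfold lab
  rw [idx_right t ts hr, edges_cons]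
  omega

lemma widx_left (t : OTree) (ts : List OTree) (k : ℕ) {r : List ℕ} (hr : r ∈ paths t) :
    (wordFrom (node (t :: ts)) k).idxOf (lab t (k + edges (node ts)) r) =
      (wordFrom t (k + edges (node ts))).idxOf (lab t (k + edges (node ts)) r) := by
  have hm : lab t (k + edges (node ts)) r ∈ wordFrom t (k + edges (node ts)) := by
    rw [mem_wordFrom]; exact lab_bounds hr _
  rw [wordFrom_cons, idxg_append_of_mem _ hm]

lemma widx_root (t : OTree) (ts : List OTree) (k : ℕ) :
    (wordFrom (node (t :: ts)) k).idxOf (k + edges (node (t :: ts))) = t.edges := by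
  have hnm : k + edges (node (t :: ts)) ∉ wordFrom t (k + edges (node ts)) := by
    rw [mem_wordFrom, edges_cons]
    omega
  rw [wordFrom_cons, idxg_append_of_not_mem _ hnm, length_wordFrom,
    idxg_cons_self]
  omega

lemma widx_right (t : OTree) (ts : List OTree) (k : ℕ) {r : List ℕ}
    (hr : r ∈ paths (node ts)) :
    (wordFrom (node (t :: ts)) k).idxOf (lab (node ts) k r) =
      t.edges + 1 + (wordFrom (node ts) k).idxOf (lab (node ts) k r) := by
  have hb := lab_bounds hr k
  have hnm : lab (node ts) k r ∉ wordFrom t (k + edges (node ts)) := by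
    rw [mem_wordFrom]
    omega
  have hne : k + edges (node (t :: ts)) ≠ lab (node ts) k r := by
    rw [edges_cons]
    omega
  rw [wordFrom_cons, idxg_append_of_not_mem _ hnm, length_wordFrom,
    idxg_cons_ne _ hne]
  omega

theorem key : ∀ (t : OTree) (k : ℕ) (p q : List ℕ), p ∈ t.paths → q ∈ t.paths →
    lab t k p < lab t k q →
    ((wordFrom t k).idxOf (lab t k p) < (wordFrom t k).idxOf (lab t k q) ↔
      q <+: p ∧ q ≠ p)
  | node [], k, p, q, hp, hq, _ => by simp [paths_nil] at hp
  | node (t :: ts), k, p, q, hp, hq, hlab => by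
    rcases mem_paths_cases hp with hp0 | ⟨rp, hrp, hpe⟩ | ⟨ip, qp, hrp, hpe⟩
    · -- p = [0] : label is maximal, contradiction with hlab
      subst hp0
      rw [lab_zero] at hlab
      have h := lab_bounds hq k
      omega
    · subst hpe
      rw [lab_left t ts k hrp] at hlab ⊢
      rcases mem_paths_cases hq with hq0 | ⟨rq, hrq, hqe⟩ | ⟨iq, qq, hrq, hqe⟩
      · -- q = [0] : both sides true
        subst hq0
        rw [lab_zero, widx_root, widx_left t ts k hrp]
        have h1 : (wordFrom t (k + edges (node ts))).idxOf
            (lab t (k + edges (node ts)) rp) < t.edges := by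
          rw [← length_wordFrom t (k + edges (node ts))]
          exact idxg_lt_length ((mem_wordFrom _ _ _).2 (lab_bounds hrp _))
        constructor
        · intro _
          refine ⟨List.cons_prefix_cons.2 ⟨rfl, List.nil_prefix⟩, ?_⟩
          intro h
          exact paths_ne_nil t rp hrp (by simpa using h.symm)
        · intro _; exact h1
      · -- both in left subtree: use IH
        subst hqe
        rw [lab_left t ts k hrq] at hlab ⊢
        rw [widx_left t ts k hrp, widx_left t ts k hrq]
        rw [key t (k + edges (node ts)) rp rq hrp hrq hlab]
        constructor
        · rintro ⟨h1, h2⟩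
          exact ⟨List.cons_prefix_cons.2 ⟨rfl, h1⟩, fun h => h2 (by simpa using h)⟩
        · rintro ⟨h1, h2⟩
          rw [List.cons_prefix_cons] at h1
          exact ⟨h1.2, fun h => h2 (by rw [h])⟩
      · -- p left, q right: label of q ≤ k + edges ts < label of p, contradiction
        subst hqe
        rw [lab_right t ts k hrq] at hlab
        have h1 := lab_bounds hrp (k + edges (node ts))
        have h2 := lab_bounds hrq k
        omega
    · subst hpe
      rw [lab_right t ts k hrp] at hlab ⊢
      rcases mem_paths_cases hq with hq0 | ⟨rq, hrq, hqe⟩ | ⟨iq, qq, hrq, hqe⟩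
      · -- q = [0], p in right: both sides false
        subst hq0
        rw [lab_zero, widx_root, widx_right t ts k hrp]
        constructor
        · intro h; omega
        · rintro ⟨h1, _⟩
          rw [List.cons_prefix_cons] at h1
          omega
      · -- q left, p right: both sides false
        subst hqe
        rw [lab_left t ts k hrq] at hlab ⊢
        rw [widx_left t ts k hrq, widx_right t ts k hrp]
        have h1 : (wordFrom t (k + edges (node ts))).idxOf
            (lab t (k + edges (node ts)) rq) < t.edges := by
          rw [← length_wordFrom t (k + edges (node ts))]
          exact idxg_lt_length ((mem_wordFrom _ _ _).2 (lab_bounds hrq _))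
        constructor
        · intro h; omega
        · rintro ⟨h1', _⟩
          rw [List.cons_prefix_cons] at h1'
          omega
      · -- both right: use IH
        subst hqe
        rw [lab_right t ts k hrq] at hlab ⊢
        rw [widx_right t ts k hrp, widx_right t ts k hrq]
        have hIH := key (node ts) k (ip :: qp) (iq :: qq) hrp hrq hlab
        constructor
        · intro h
          rcases hIH.1 (by omega) with ⟨h1, h2⟩
          rw [List.cons_prefix_cons] at h1
          refine ⟨List.cons_prefix_cons.2 ⟨by omega, h1.2⟩, ?_⟩
          intro he
          apply h2
          injection he with he1 he2
          have hie : iq = ip := by omega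
          rw [hie, he2]
        · rintro ⟨h1, h2⟩
          rw [List.cons_prefix_cons] at h1
          have h' := hIH.2 ⟨List.cons_prefix_cons.2 ⟨by omega, h1.2⟩, by
            intro he
            apply h2
            injection he with he1 he2
            rw [he1, he2]⟩
          omega

end OTree

/-- For nonroot vertices `u, v` of an ordered tree `T` with
`label(u) < label(v)`, the label of `u` precedes the label of `v` in the
postorder reading `π(T)` if and only if `v` is a proper ancestor of `u`. -/
theorem stmt17 (T : OTree) (p q : List ℕ)
    (hp : p ≠ []) (hq : q ≠ [])
    (hpv : (T.subtreeAt? p).isSome) (hqv : (T.subtreeAt? q).isSome)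
    (hlab : T.labelOf p < T.labelOf q) :
    T.word.idxOf (T.labelOf p) < T.word.idxOf (T.labelOf q) ↔
      q <+: p ∧ q ≠ p := by
  have hpP := OTree.mem_paths_of_valid T p hp hpv
  have hqP := OTree.mem_paths_of_valid T q hq hqv
  have e1 : T.labelOf p = OTree.lab T 0 p := by simp [OTree.labelOf, OTree.lab]
  have e2 : T.labelOf q = OTree.lab T 0 q := by simp [OTree.labelOf, OTree.lab]
  rw [e1, e2] at hlab ⊢
  exact OTree.key T 0 p q hpP hqP hlab
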